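/- Fix a common integration constant c = c₁ = c₂ with c < −8M³Ĥ. Then the interior quasi-local masses, defined on an interval (2M − δ, 2M) for some δ > 0, and the exterior quasi-local masses on (2M, ∞) match continuously across the event horizon: lim_{r→2M⁻} m_H^int(r) = lim_{r→2M⁺} m_H^ext(r) = M·(1 − c²/(16M⁴) − Ĥc/M − 4M²Ĥ²), and lim_{r→2M⁻} m_BY^int(r) = lim_{r→2M⁺} m_BY^ext(r). -/

import Mathlib

open Real Filter Topology Set

/-- Schwarzschild lapse-type function `f(r) = 1 - 2M/r`. -/
noncomputable def f (M r : ℝ) : ℝ := 1 - 2 * M / r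

/-- `P(r) = Ĥ·r + c/r²`. -/
noncomputable def P (H c r : ℝ) : ℝ := H * r + c / r ^ 2

/-- Exterior CMC slope `h'(r) = P(r)/(f(r)·√(f(r) + P(r)²))` for `r > 2M`. -/
noncomputable def h' (M H c r : ℝ) : ℝ :=
  P H c r / (f M r * Real.sqrt (f M r + (P H c r) ^ 2))

/-- Exterior Hawking mass `m_H^ext(r) = (r/2)(1 − (f⁻¹ − f h'²)⁻¹)`. -/
noncomputable def mHext (M H c r : ℝ) : ℝ :=
  r / 2 * (1 - ((f M r)⁻¹ - f M r * (h' M H c r) ^ 2)⁻¹)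

/-- Exterior Brown–York mass `m_BY^ext(r) = r(1 − (f⁻¹ − f h'²)^(−1/2))`. -/
noncomputable def mBYext (M H c r : ℝ) : ℝ :=
  r * (1 - ((f M r)⁻¹ - f M r * (h' M H c r) ^ 2) ^ (-(1 : ℝ) / 2))

/-- Interior CMC slope `𝔥'(r) = |P(r)|/((2M/r − 1)·√(P(r)² + f(r)))` for `0 < r < 2M`. -/
noncomputable def hInt' (M H c r : ℝ) : ℝ :=
  |P H c r| / ((2 * M / r - 1) * Real.sqrt ((P H c r) ^ 2 + f M r))

/-- Interior Hawking mass `m_H^int(r) = (r/2)(1 − (f⁻¹ − f 𝔥'²)⁻¹)`. -/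
noncomputable def mHint (M H c r : ℝ) : ℝ :=
  r / 2 * (1 - ((f M r)⁻¹ - f M r * (hInt' M H c r) ^ 2)⁻¹)

/-- Interior Brown–York mass `m_BY^int(r) = r(1 − (f⁻¹ − f 𝔥'²)^(−1/2))`. -/
noncomputable def mBYint (M H c r : ℝ) : ℝ :=
  r * (1 - ((f M r)⁻¹ - f M r * (hInt' M H c r) ^ 2) ^ (-(1 : ℝ) / 2))

/-!
Off the horizon both slopes satisfy `f⁻¹ - f·h'² = (f + P²)⁻¹`, and the interior and exterior
slopes have the same square. Hence on both sides of `r = 2M` the Hawking mass equals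
`r/2·(1 - (f + P²))` and the Brown–York mass equals `r·(1 - √(f + P²))`. These expressions are
continuous at the horizon, where `f = 0` and `f + P² = P(2M)² > 0` because `c ≠ -8M³Ĥ`.
-/

theorem inv_rpow_neg_one_half {s : ℝ} (hs : 0 ≤ s) : s⁻¹ ^ (-(1 : ℝ) / 2) = √s := by
  rw [neg_div, rpow_neg (inv_nonneg.2 hs), inv_rpow hs, inv_inv, sqrt_eq_rpow]

theorem f_ne_zero {M r : ℝ} (hr : r ≠ 0) (hr2 : r ≠ 2 * M) : f M r ≠ 0 := by
  rw [f, sub_ne_zero, ne_comm, Ne, div_eq_one_iff_eq hr]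
  exact hr2.symm

theorem f_two_mul {M : ℝ} (hM : M ≠ 0) : f M (2 * M) = 0 := by
  rw [f, div_self (by positivity), sub_self]

theorem continuousAt_f_add_P_sq {M H c r : ℝ} (hr : r ≠ 0) :
    ContinuousAt (fun r => f M r + P H c r ^ 2) r := by
  unfold f P
  fun_prop (disch := positivity)

theorem P_two_mul_neg {M H c : ℝ} (hM : 0 < M) (hc : c < -8 * M ^ 3 * H) :
    P H c (2 * M) < 0 := by
  have hP : P H c (2 * M) = (8 * M ^ 3 * H + c) / (4 * M ^ 2) := by
    rw [P]; field_simp; ring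
  rw [hP]
  exact div_neg_of_neg_of_pos (by linarith) (by positivity)

theorem hInt'_sq_eq_h'_sq (M H c r : ℝ) : hInt' M H c r ^ 2 = h' M H c r ^ 2 := by
  have hf : 2 * M / r - 1 = -f M r := by unfold f; ring
  rw [hInt', h', hf, add_comm, div_pow, div_pow, sq_abs, mul_pow, mul_pow, neg_sq]

theorem mHint_eq_mHext (M H c : ℝ) : mHint M H c = mHext M H c := by
  ext r
  rw [mHint, mHext, hInt'_sq_eq_h'_sq]

theorem mBYint_eq_mBYext (M H c : ℝ) : mBYint M H c = mBYext M H c := by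
  ext r
  rw [mBYint, mBYext, hInt'_sq_eq_h'_sq]

theorem inv_f_sub_f_mul_h'_sq {M H c r : ℝ} (hf : f M r ≠ 0) (hs : 0 < f M r + P H c r ^ 2) :
    (f M r)⁻¹ - f M r * h' M H c r ^ 2 = (f M r + P H c r ^ 2)⁻¹ := by
  rw [h', div_pow, mul_pow, sq_sqrt hs.le]
  field_simp
  ring

theorem mHext_eq_of_f_ne_zero {M H c r : ℝ} (hf : f M r ≠ 0) (hs : 0 < f M r + P H c r ^ 2) :
    mHext M H c r = r / 2 * (1 - (f M r + P H c r ^ 2)) := by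
  rw [mHext, inv_f_sub_f_mul_h'_sq hf hs, inv_inv]

theorem mBYext_eq_of_f_ne_zero {M H c r : ℝ} (hf : f M r ≠ 0) (hs : 0 < f M r + P H c r ^ 2) :
    mBYext M H c r = r * (1 - √(f M r + P H c r ^ 2)) := by
  rw [mBYext, inv_f_sub_f_mul_h'_sq hf hs, inv_rpow_neg_one_half hs.le]

theorem eventually_f_ne_zero_and_f_add_P_sq_pos {M H c : ℝ} (hM : 0 < M)
    (hP : P H c (2 * M) ≠ 0) :
    ∀ᶠ r in 𝓝[≠] (2 * M), f M r ≠ 0 ∧ 0 < f M r + P H c r ^ 2 := by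
  have h2M : (2 * M : ℝ) ≠ 0 := by positivity
  have hpos : ∀ᶠ r in 𝓝 (2 * M), 0 < f M r + P H c r ^ 2 :=
    continuousAt_const.eventually_lt (continuousAt_f_add_P_sq h2M)
      (by rw [f_two_mul hM.ne', zero_add]; positivity)
  filter_upwards [nhdsWithin_le_nhds (hpos.and (eventually_ne_nhds h2M)), self_mem_nhdsWithin]
    with r ⟨hs, hr⟩ hr2
  exact ⟨f_ne_zero hr hr2, hs⟩

theorem tendsto_mHext_nhdsNE {M H c : ℝ} (hM : 0 < M) (hP : P H c (2 * M) ≠ 0) :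
    Tendsto (mHext M H c) (𝓝[≠] (2 * M)) (𝓝 (M * (1 - P H c (2 * M) ^ 2))) := by
  have hlim : Tendsto (fun r => r / 2 * (1 - (f M r + P H c r ^ 2))) (𝓝 (2 * M))
      (𝓝 (2 * M / 2 * (1 - (f M (2 * M) + P H c (2 * M) ^ 2)))) :=
    ((continuousAt_id.div_const 2).mul
      (continuousAt_const.sub (continuousAt_f_add_P_sq (by positivity)))).tendsto
  rw [f_two_mul hM.ne', zero_add, mul_div_cancel_left₀ M two_ne_zero] at hlim
  refine (hlim.mono_left nhdsWithin_le_nhds).congr' ?_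
  filter_upwards [eventually_f_ne_zero_and_f_add_P_sq_pos hM hP] with r ⟨hf, hs⟩
  exact (mHext_eq_of_f_ne_zero hf hs).symm

theorem tendsto_mBYext_nhdsNE {M H c : ℝ} (hM : 0 < M) (hP : P H c (2 * M) ≠ 0) :
    Tendsto (mBYext M H c) (𝓝[≠] (2 * M)) (𝓝 (2 * M * (1 - |P H c (2 * M)|))) := by
  have hlim : Tendsto (fun r => r * (1 - √(f M r + P H c r ^ 2))) (𝓝 (2 * M))
      (𝓝 (2 * M * (1 - √(f M (2 * M) + P H c (2 * M) ^ 2)))) :=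
    (continuousAt_id.mul
      (continuousAt_const.sub (continuousAt_f_add_P_sq (by positivity)).sqrt)).tendsto
  rw [f_two_mul hM.ne', zero_add, sqrt_sq_eq_abs] at hlim
  refine (hlim.mono_left nhdsWithin_le_nhds).congr' ?_
  filter_upwards [eventually_f_ne_zero_and_f_add_P_sq_pos hM hP] with r ⟨hf, hs⟩
  exact (mBYext_eq_of_f_ne_zero hf hs).symm

/-- Fix a common integration constant `c = c₁ = c₂` with `c < −8M³Ĥ`. Then the interior
quasi-local masses and the exterior ones match continuously across the event horizon:
`lim_{r→2M⁻} m_H^int(r) = lim_{r→2M⁺} m_H^ext(r) = M(1 − c²/(16M⁴) − Ĥc/M − 4M²Ĥ²)`,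
and `lim_{r→2M⁻} m_BY^int(r) = lim_{r→2M⁺} m_BY^ext(r)`. -/
theorem masses_match_across_horizon (M H c : ℝ) (hM : 0 < M)
    (hc : c < -8 * M ^ 3 * H) :
    (Tendsto (mHint M H c) (𝓝[<] (2 * M))
        (𝓝 (M * (1 - c ^ 2 / (16 * M ^ 4) - H * c / M - 4 * M ^ 2 * H ^ 2))) ∧
      Tendsto (mHext M H c) (𝓝[>] (2 * M))
        (𝓝 (M * (1 - c ^ 2 / (16 * M ^ 4) - H * c / M - 4 * M ^ 2 * H ^ 2)))) ∧
    ∃ L : ℝ, Tendsto (mBYint M H c) (𝓝[<] (2 * M)) (𝓝 L) ∧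
      Tendsto (mBYext M H c) (𝓝[>] (2 * M)) (𝓝 L) := by
  have hP := (P_two_mul_neg hM hc).ne
  have hHawking := tendsto_mHext_nhdsNE hM hP
  have hBrownYork := tendsto_mBYext_nhdsNE hM hP
  rw [show M * (1 - P H c (2 * M) ^ 2) =
      M * (1 - c ^ 2 / (16 * M ^ 4) - H * c / M - 4 * M ^ 2 * H ^ 2) by
    rw [P]; field_simp; ring] at hHawking
  rw [mHint_eq_mHext, mBYint_eq_mBYext]
  exact ⟨⟨hHawking.mono_left (nhdsLT_le_nhdsNE _), hHawking.mono_left (nhdsGT_le_nhdsNE _)⟩, _,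
    hBrownYork.mono_left (nhdsLT_le_nhdsNE _), hBrownYork.mono_left (nhdsGT_le_nhdsNE _)⟩
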